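/- The signed graph obtained from an all-negative complete graph K_4 on vertices u, v, w, x by joining m ≥ 1 new pendant vertices to x by positive edges is an additively graceful signed graph. -/

import Mathlib

open Finset

/-- Edge label for a negative (or ordinary) edge: sum of endpoint labels. -/
def negLabel (f : ℕ → ℕ) : Sym2 ℕ → ℕ :=
  Sym2.lift ⟨fun a b => f a + f b, fun a b => Nat.add_comm _ _⟩

/-- Edge label for a positive edge: absolute difference of endpoint labels. -/
def posLabel (f : ℕ → ℕ) : Sym2 ℕ → ℕ :=
  Sym2.lift ⟨fun a b => max (f a) (f b) - min (f a) (f b),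
    fun a b => by simp only []; rw [max_comm, min_comm]⟩

/-- A (p,q)-graph with vertex finset `Vs` and edge finset `E` is additively graceful:
there is an injective `f : Vs → {0,…,⌈(q+1)/2⌉}` whose induced edge sums are
distinct and exactly `{1,…,q}`.  (Note `⌈(q+1)/2⌉ = (q+2)/2` in `ℕ`.) -/
def IsAddGracefulGraph (Vs : Finset ℕ) (E : Finset (Sym2 ℕ)) : Prop :=
  ∃ f : ℕ → ℕ, Set.InjOn f ↑Vs ∧ (∀ v ∈ Vs, f v ≤ (E.card + 2) / 2) ∧
    Set.InjOn (negLabel f) ↑E ∧ E.image (negLabel f) = Finset.Icc 1 E.card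

/-- A signed graph with vertex finset `Vs`, positive edges `P` (m := P.card) and
negative edges `N` (n := N.card) is additively graceful: there is an injective
`f : Vs → {0,…,m + ⌈(n+1)/2⌉}` with positive-edge labels `|f u - f v|` exactly
`{1,…,m}` and negative-edge labels `f u + f v` exactly `{1,…,n}`. -/
def IsAddGracefulSigned (Vs : Finset ℕ) (P N : Finset (Sym2 ℕ)) : Prop :=
  ∃ f : ℕ → ℕ, Set.InjOn f ↑Vs ∧
    (∀ v ∈ Vs, f v ≤ P.card + (N.card + 2) / 2) ∧
    Set.InjOn (posLabel f) ↑P ∧ P.image (posLabel f) = Finset.Icc 1 P.card ∧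
    Set.InjOn (negLabel f) ↑N ∧ N.image (negLabel f) = Finset.Icc 1 N.card

/-! The labels `0, 1, 2, 4` on `K₄` have pairwise sums `1, …, 6`, and the pendant vertices at `x`
(label `4`) get `5, …, m + 4`, so the positive edges have differences `1, …, m`. Once the edge
labels of each sign are exactly `{1, …, k}` for `k` edges, distinctness is automatic by counting. -/

/-- Vertices `u, v, w, x` are `0, 1, 2, 3`; the pendant vertex `i ≥ 4` gets label `i + 1`. -/
def k4PendantLabeling (i : ℕ) : ℕ := if i < 3 then i else i + 1

lemma k4PendantLabeling_injective : Function.Injective k4PendantLabeling := by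
  intro a b h
  simp only [k4PendantLabeling] at h
  split_ifs at h <;> omega

lemma posLabel_k4PendantLabeling_pendant (j : ℕ) (hj : 1 ≤ j) :
    posLabel k4PendantLabeling s(3, j + 3) = j := by
  change max (k4PendantLabeling 3) (k4PendantLabeling (j + 3)) -
    min (k4PendantLabeling 3) (k4PendantLabeling (j + 3)) = j
  simp only [k4PendantLabeling]
  split_ifs <;> omega

lemma injOn_of_image_eq_Icc {α : Type*} {g : α → ℕ} {s : Finset α}
    (h : s.image g = Icc 1 s.card) : Set.InjOn g s :=
  Finset.injOn_of_card_image_eq (by rw [h, Nat.card_Icc, Nat.add_sub_cancel])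

lemma isAddGracefulSigned_of_image_eq_Icc {Vs : Finset ℕ} {P N : Finset (Sym2 ℕ)} {f : ℕ → ℕ}
    (hf : Set.InjOn f Vs) (hbound : ∀ v ∈ Vs, f v ≤ P.card + (N.card + 2) / 2)
    (hP : P.image (posLabel f) = Icc 1 P.card) (hN : N.image (negLabel f) = Icc 1 N.card) :
    IsAddGracefulSigned Vs P N :=
  ⟨f, hf, hbound, injOn_of_image_eq_Icc hP, hP, injOn_of_image_eq_Icc hN, hN⟩

theorem stmt_8_general (m : ℕ) :
    IsAddGracefulSigned (Finset.range (m + 4))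
      ((Finset.Icc 4 (m + 3)).image fun i => s(3, i))
      {s(0, 1), s(0, 2), s(0, 3), s(1, 2), s(1, 3), s(2, 3)} := by
  have hP : ((Finset.Icc 4 (m + 3)).image fun i => s(3, i)) =
      (Icc 1 m).image fun j => s(3, j + 3) := by
    rw [← Finset.image_add_right_Icc 1 m 3, Finset.image_image]
    rfl
  have hPcard : ((Icc 1 m).image fun j => s(3, j + 3)).card = m := by
    have hinj : Function.Injective fun j => s(3, j + 3) :=
      (Sym2.mkEmbedding 3).injective.comp (add_left_injective 3)
    rw [card_image_of_injective _ hinj, Nat.card_Icc, Nat.add_sub_cancel]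
  rw [hP]
  refine isAddGracefulSigned_of_image_eq_Icc k4PendantLabeling_injective.injOn ?_ ?_ (by decide)
  · intro v hv
    have hle : k4PendantLabeling v ≤ m + 4 := by
      unfold k4PendantLabeling
      split_ifs <;> simp only [Finset.mem_range] at hv <;> omega
    rw [hPcard]
    exact hle.trans_eq rfl
  · rw [hPcard, Finset.image_image]
    calc (Icc 1 m).image (posLabel k4PendantLabeling ∘ fun j => s(3, j + 3))
        = (Icc 1 m).image id :=
          Finset.image_congr fun j hj => posLabel_k4PendantLabeling_pendant j (mem_Icc.1 hj).1
      _ = Icc 1 m := Finset.image_id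

/-- The signed graph from an all-negative `K₄` on `0,1,2,3` with `m ≥ 1`
pendant vertices `4,…,m+3` joined to `x = 3` by positive edges is additively
graceful. -/
theorem stmt_8 (m : ℕ) (hm : 1 ≤ m) :
    IsAddGracefulSigned (Finset.range (m + 4))
      ((Finset.Icc 4 (m + 3)).image fun i => s(3, i))
      {s(0, 1), s(0, 2), s(0, 3), s(1, 2), s(1, 3), s(2, 3)} :=
  stmt_8_general m
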